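/- Suppose ℛ is a coherent risk measure on L² with risk envelope 𝒬, and suppose 1 is a relative interior point of 𝒬 relative to 𝒫, i.e. there exists δ > 0 such that every Q ∈ 𝒫 with ‖Q − 1‖₂ < δ belongs to 𝒬. Then ℛ is averse; in particular ℛ(X) > E[X] for every X ∈ L² that is not a.s. equal to a constant. -/

import Mathlib

/-! For a nonconstant `X` with mean `m`, the centred indicator `G = 1_{X > m} - P(X > m)` has
`|G| ≤ 1`, `E[G] = 0` and `E[X G] = E[(X - m)⁺]`, which is positive since `X` is not a.s. equal
to `m`. So `Q = 1 + t G` is a density at distance at most `t` from `1`; for small `t > 0` it lies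
in `𝒬`, whence `ℛ(X) ≥ E[X Q] = m + t E[X G] > m`. -/

open MeasureTheory Filter Topology

noncomputable section

variable {Ω : Type*} [MeasurableSpace Ω] (μ : Measure Ω) [IsProbabilityMeasure μ]

/-- The space `L²(Ω, Σ, P₀; ℝ)`. -/
abbrev L2 := Lp ℝ 2 μ

/-- Expectation of an `L²` random variable. -/
def expect (X : L2 μ) : ℝ := ∫ ω, X ω ∂μ

/-- `E[X Q]`. -/
def pairing (X Q : L2 μ) : ℝ := ∫ ω, X ω * Q ω ∂μ

/-- The set of densities `𝒫 = {Q ∈ L² : Q ≥ 0 a.s., E[Q] = 1}`. -/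
def densities : Set (L2 μ) := {Q | (0 : Ω → ℝ) ≤ᵐ[μ] ⇑Q ∧ ∫ ω, Q ω ∂μ = 1}

/-- The constant random variable as an element of `L²`. -/
def constL2 (c : ℝ) : L2 μ := (memLp_const c).toLp (fun _ => c)

/-- A coherent risk measure (values in `(-∞, +∞]`, i.e. never `⊥`), axioms (A1)–(A5). -/
structure IsCoherent (ℛ : L2 μ → EReal) : Prop where
  nonbot : ∀ X : L2 μ, ℛ X ≠ ⊥
  const : ∀ C : ℝ, ℛ (constL2 μ C) = (C : EReal)
  convex : ∀ X X' : L2 μ, ∀ l : ℝ, 0 ≤ l → l ≤ 1 →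
    ℛ ((1 - l) • X + l • X') ≤ ((1 - l : ℝ) : EReal) * ℛ X + (l : EReal) * ℛ X'
  mono : ∀ X X' : L2 μ, (⇑X ≤ᵐ[μ] ⇑X') → ℛ X ≤ ℛ X'
  closed : ∀ (Xk : ℕ → L2 μ) (X : L2 μ),
    Tendsto (fun k => ‖Xk k - X‖) atTop (𝓝 0) → (∀ k, ℛ (Xk k) ≤ 0) → ℛ X ≤ 0
  posHom : ∀ (X : L2 μ) (l : ℝ), 0 < l → ℛ (l • X) = (l : EReal) * ℛ X

/-- A risk envelope: a nonempty closed convex subset of `𝒫`. -/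
def IsRiskEnvelope (𝒬 : Set (L2 μ)) : Prop :=
  𝒬.Nonempty ∧ IsClosed 𝒬 ∧ Convex ℝ 𝒬 ∧ 𝒬 ⊆ densities μ

/-- `ℛ` has risk envelope `𝒬`: `ℛ(X) = sup_{Q ∈ 𝒬} E[XQ]`. -/
def HasEnvelope (ℛ : L2 μ → EReal) (𝒬 : Set (L2 μ)) : Prop :=
  ∀ X : L2 μ, ℛ X = ⨆ Q ∈ 𝒬, ((pairing μ X Q : ℝ) : EReal)

/-- Inf-convolution of finitely many functionals. -/
def infConv {n : ℕ} (ℛ : Fin n → L2 μ → EReal) (X : L2 μ) : EReal :=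
  ⨅ (Y : Fin n → L2 μ) (_ : ∑ i, Y i = X), ∑ i, ℛ i (Y i)

/-- The lower semicontinuous hull (largest lsc minorant) of an `EReal`-valued function. -/
def lscHull {α : Type*} [TopologicalSpace α] (f : α → EReal) (x : α) : EReal :=
  ⨆ g ∈ {g : α → EReal | LowerSemicontinuous g ∧ ∀ y, g y ≤ f y}, g x

section

variable {μ}

lemma integral_posPart_sub_integral_pos {f : Ω → ℝ} (hf : Integrable f μ)
    (hnc : ¬ ∃ c : ℝ, f =ᵐ[μ] fun _ => c) : 0 < ∫ ω, (f ω - ∫ x, f x ∂μ)⁺ ∂μ := by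
  set m := ∫ x, f x ∂μ
  have hfm : Integrable (fun ω => f ω - m) μ := hf.sub (integrable_const m)
  have hmean : ∫ ω, (f ω - m) ∂μ = 0 := by simp [integral_sub hf (integrable_const m), m]
  refine (integral_nonneg fun ω => posPart_nonneg _).lt_of_ne fun hzero => hnc ⟨m, ?_⟩
  have habs : ∫ ω, |f ω - m| ∂μ = 0 := by
    rw [integral_abs_eq_two_mul_integral_posPart_sub_integral hfm, ← hzero, hmean]
    ring
  filter_upwards [(integral_eq_zero_iff_of_nonneg (fun _ => abs_nonneg _) hfm.abs).mp habs]
    with ω hω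
  simpa [sub_eq_zero] using hω

lemma integral_mul_indicator_sub_measureReal {f : Ω → ℝ} (hf : Integrable f μ) {A : Set Ω}
    (hA : MeasurableSet A) :
    ∫ ω, f ω * (A.indicator 1 ω - μ.real A) ∂μ = ∫ ω in A, (f ω - ∫ x, f x ∂μ) ∂μ := by
  have hfA : ∀ ω, f ω * A.indicator 1 ω = A.indicator f ω := fun ω => by
    by_cases hω : ω ∈ A <;> simp [hω]
  simp_rw [mul_sub, hfA]
  rw [integral_sub ((integrable_indicator_iff hA).mpr hf.integrableOn) (hf.mul_const _),
    integral_indicator hA, integral_mul_const, integral_sub hf.integrableOn (integrable_const _),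
    setIntegral_const, smul_eq_mul]
  ring

lemma setIntegral_pos_eq_integral_posPart {ν : Measure Ω} {g : Ω → ℝ} (hg : Measurable g) :
    ∫ ω in {ω | 0 < g ω}, g ω ∂ν = ∫ ω, (g ω)⁺ ∂ν := by
  rw [← integral_indicator (measurableSet_lt measurable_const hg)]
  congr 1 with ω
  by_cases hω : 0 < g ω
  · simp [Set.indicator_of_mem (show ω ∈ {ω | 0 < g ω} from hω), posPart_eq_self.mpr hω.le]
  · simp [Set.indicator_of_notMem (show ω ∉ {ω | 0 < g ω} from hω),
      posPart_eq_zero.mpr (not_lt.mp hω)]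

lemma coeFn_constL2 (c : ℝ) : ⇑(constL2 μ c) =ᵐ[μ] fun _ => c :=
  (memLp_const c).coeFn_toLp

lemma pairing_eq_inner {ν : Measure Ω} (X Q : L2 ν) : pairing ν X Q = inner ℝ X Q := by
  simp only [pairing, L2.inner_def, RCLike.inner_apply, conj_trivial, mul_comm]

lemma pairing_add_smul {ν : Measure Ω} (X P G : L2 ν) (t : ℝ) :
    pairing ν X (P + t • G) = pairing ν X P + t * pairing ν X G := by
  simp only [pairing_eq_inner, inner_add_right, inner_smul_right]

lemma pairing_constL2_one (X : L2 μ) : pairing μ X (constL2 μ 1) = ∫ ω, X ω ∂μ :=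
  integral_congr_ae <| (coeFn_constL2 1).mono fun ω hω => by simp [hω]

lemma norm_le_one_of_abs_le_one {G : L2 μ} (hG : ∀ᵐ ω ∂μ, |G ω| ≤ 1) : ‖G‖ ≤ 1 := by
  have h := Lp.norm_le_of_ae_bound zero_le_one (hG.mono fun ω h => by rwa [Real.norm_eq_abs])
  have h1 : measureUnivNNReal μ = 1 := by simp [measureUnivNNReal]
  simpa [h1] using h

lemma constL2_one_add_smul_mem_densities {G : L2 μ} (hG : ∀ᵐ ω ∂μ, |G ω| ≤ 1)
    (hG₀ : ∫ ω, G ω ∂μ = 0) {t : ℝ} (ht₀ : 0 ≤ t) (ht₁ : t ≤ 1) :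
    constL2 μ 1 + t • G ∈ densities μ := by
  have hQ : ⇑(constL2 μ 1 + t • G) =ᵐ[μ] fun ω => 1 + t * G ω := by
    filter_upwards [Lp.coeFn_add (constL2 μ 1) (t • G), Lp.coeFn_smul t G, coeFn_constL2 1]
      with ω h₁ h₂ h₃
    rw [h₁, Pi.add_apply, h₂, h₃, Pi.smul_apply, smul_eq_mul]
  refine ⟨?_, ?_⟩
  · filter_upwards [hQ, hG] with ω hω hGω
    rw [Pi.zero_apply, hω]
    nlinarith [abs_le.mp hGω]
  · rw [integral_congr_ae hQ, integral_add (integrable_const 1)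
      (((Lp.memLp G).integrable one_le_two).const_mul t), integral_const_mul, hG₀]
    simp

lemma exists_bounded_centered_pairing_pos (X : L2 μ) (hX : ¬ ∃ c : ℝ, ⇑X =ᵐ[μ] fun _ => c) :
    ∃ G : L2 μ, (∀ᵐ ω ∂μ, |G ω| ≤ 1) ∧ ∫ ω, G ω ∂μ = 0 ∧ 0 < pairing μ X G := by
  set m := ∫ ω, X ω ∂μ
  have hXint : Integrable X μ := (Lp.memLp X).integrable one_le_two
  have hXm : Measurable fun ω => X ω - m := (Lp.stronglyMeasurable X).measurable.sub_const m
  set A := {ω | 0 < X ω - m}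
  have hA : MeasurableSet A := measurableSet_lt measurable_const hXm
  set g : Ω → ℝ := fun ω => A.indicator 1 ω - μ.real A
  have hg : MemLp g 2 μ :=
    (memLp_indicator_const 2 hA 1 (Or.inr (measure_ne_top μ A))).sub (memLp_const _)
  have hgbd : ∀ ω, |g ω| ≤ 1 := fun ω => by
    have h₀ : 0 ≤ μ.real A := measureReal_nonneg
    have h₁ : μ.real A ≤ 1 := measureReal_le_one
    rw [abs_le]
    by_cases hω : ω ∈ A <;>
      simp only [g, hω, Set.indicator_of_mem, Set.indicator_of_notMem, not_false_eq_true,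
        Pi.one_apply] <;>
      constructor <;> linarith
  refine ⟨hg.toLp g, hg.coeFn_toLp.mono fun ω hω => hω ▸ hgbd ω, ?_, ?_⟩
  · rw [integral_congr_ae hg.coeFn_toLp, integral_sub ((integrable_const 1).indicator hA)
      (integrable_const _), integral_indicator_one hA]
    simp
  · calc 0 < ∫ ω, (X ω - m)⁺ ∂μ := integral_posPart_sub_integral_pos hXint hX
      _ = ∫ ω in A, (X ω - m) ∂μ := (setIntegral_pos_eq_integral_posPart hXm).symm
      _ = ∫ ω, X ω * g ω ∂μ := (integral_mul_indicator_sub_measureReal hXint hA).symm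
      _ = pairing μ X (hg.toLp g) :=
        integral_congr_ae (hg.coeFn_toLp.mono fun ω hω => by simp only [hω])

lemma exists_mem_densities_norm_sub_lt_integral_lt_pairing (X : L2 μ)
    (hX : ¬ ∃ c : ℝ, ⇑X =ᵐ[μ] fun _ => c) {δ : ℝ} (hδ : 0 < δ) :
    ∃ Q ∈ densities μ, ‖Q - constL2 μ 1‖ < δ ∧ ∫ ω, X ω ∂μ < pairing μ X Q := by
  obtain ⟨G, hGbd, hGmean, hcov⟩ := exists_bounded_centered_pairing_pos X hX
  set t := min 1 (δ / 2)
  have ht : 0 < t := lt_min one_pos (half_pos hδ)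
  refine ⟨constL2 μ 1 + t • G,
    constL2_one_add_smul_mem_densities hGbd hGmean ht.le (min_le_left _ _), ?_, ?_⟩
  · rw [add_sub_cancel_left, norm_smul, Real.norm_of_nonneg ht.le]
    calc t * ‖G‖ ≤ t := mul_le_of_le_one_right ht.le (norm_le_one_of_abs_le_one hGbd)
      _ ≤ δ / 2 := min_le_right _ _
      _ < δ := half_lt_self hδ
  · rw [pairing_add_smul, pairing_constL2_one]
    exact lt_add_of_pos_right _ (mul_pos ht hcov)

end

theorem stmt_13 (ℛ : L2 μ → EReal) (𝒬 : Set (L2 μ))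
    (henv : HasEnvelope μ ℛ 𝒬)
    (hint : ∃ δ : ℝ, 0 < δ ∧ ∀ Q ∈ densities μ, ‖Q - constL2 μ 1‖ < δ → Q ∈ 𝒬) :
    ∀ X : L2 μ, (¬ ∃ c : ℝ, ⇑X =ᵐ[μ] fun _ => c) →
      ((∫ ω, X ω ∂μ : ℝ) : EReal) < ℛ X := by
  obtain ⟨δ, hδ, hball⟩ := hint
  intro X hX
  obtain ⟨Q, hQ, hQδ, hXQ⟩ := exists_mem_densities_norm_sub_lt_integral_lt_pairing X hX hδ
  calc ((∫ ω, X ω ∂μ : ℝ) : EReal) < pairing μ X Q := EReal.coe_lt_coe_iff.mpr hXQ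
    _ ≤ ℛ X := henv X ▸ le_iSup₂_of_le Q (hball Q hQ hQδ) le_rfl
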